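/- arXiv:1011.0413 — 5 statements merged into one kernel-verified Lean document; each statement's English description precedes it below -/
import Mathlib

section
/- Let X be an n×p real matrix, let I ⊆ {1,...,p} be an index set, and let W be a p×p real matrix whose rows indexed by the complement I^c are all zero. Then ‖X − X W W⁺‖_F ≥ ‖X − X^I (X^I)⁺ X‖_F, where X^I denotes the submatrix of columns of X indexed by I and M⁺ denotes the Moore–Penrose pseudoinverse. -/
open Matrix
noncomputable def frob {m n : Type*} [Fintype m] [Fintype n] (A : Matrix m n ℝ) : ℝ :=
  Real.sqrt (∑ i, ∑ j, A i j ^ 2)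

def IsMoorePenrose {m n : Type*} [Fintype m] [Fintype n]
    (A : Matrix m n ℝ) (Ap : Matrix n m ℝ) : Prop :=
  A * Ap * A = A ∧ Ap * A * Ap = Ap ∧ (A * Ap)ᵀ = A * Ap ∧ (Ap * A)ᵀ = Ap * A

def colSub {n p : ℕ} (X : Matrix (Fin n) (Fin p) ℝ) (I : Finset (Fin p)) :
    Matrix (Fin n) ↥I ℝ := Matrix.of fun i j => X i j.1

/-! If `Q = X^I (X^I)⁺`, then `Q` is a symmetric idempotent fixing every matrix whose columns lie in
the column space of `X^I`; since the rows of `W` outside `I` vanish, `X W W⁺` is such a matrix.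
Writing `X - X W W⁺ = (X - Q X) + Q (X - X W W⁺)`, the two summands are Frobenius-orthogonal, so
Pythagoras gives the inequality. -/

section

variable {m n : Type*} [Fintype m] [Fintype n]

theorem frob_le_frob_add_of_transpose_mul_eq_zero {a b : Matrix m n ℝ} (h : aᵀ * b = 0) :
    frob a ≤ frob (a + b) := by
  have hcross : ∑ i, ∑ j, a i j * b i j = 0 := by
    rw [Finset.sum_comm]
    simpa [trace, mul_apply] using congrArg trace h
  have hb : 0 ≤ ∑ i, ∑ j, b i j ^ 2 := by positivity
  refine Real.sqrt_le_sqrt ?_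
  calc ∑ i, ∑ j, a i j ^ 2
      ≤ ∑ i, ∑ j, a i j ^ 2 + 2 * ∑ i, ∑ j, a i j * b i j + ∑ i, ∑ j, b i j ^ 2 := by
        rw [hcross]; linarith
    _ = ∑ i, ∑ j, (a + b) i j ^ 2 := by
        simp only [Matrix.add_apply, add_sq, Finset.sum_add_distrib, Finset.mul_sum, mul_assoc]

theorem frob_sub_mul_le_frob_sub_of_mul_eq {Q : Matrix m m ℝ} (hsymm : Q.IsSymm)
    (hidem : IsIdempotentElem Q) (X : Matrix m n ℝ) {M : Matrix m n ℝ} (hM : Q * M = M) :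
    frob (X - Q * X) ≤ frob (X - M) := by
  have hsplit : X - M = (X - Q * X) + Q * (X - M) := by
    rw [Matrix.mul_sub, hM]; abel
  have horth : (X - Q * X)ᵀ * (Q * (X - M)) = 0 := by
    rw [transpose_sub, transpose_mul, hsymm, Matrix.sub_mul, Matrix.mul_assoc Xᵀ Q,
      ← Matrix.mul_assoc Q Q, hidem, sub_self]
  rw [hsplit]
  exact frob_le_frob_add_of_transpose_mul_eq_zero horth

end

theorem mul_eq_colSub_mul {n p : ℕ} {o : Type*} (X : Matrix (Fin n) (Fin p) ℝ) {I : Finset (Fin p)}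
    {W : Matrix (Fin p) o ℝ} (hW : ∀ i ∉ I, W i = 0) :
    X * W = colSub X I * Matrix.of fun (i : I) j => W i j := by
  ext k j
  simp only [mul_apply, of_apply, colSub]
  rw [Finset.sum_coe_sort I (fun i => X k i * W i j)]
  refine (Finset.sum_subset (Finset.subset_univ I) fun i _ hi => ?_).symm
  simp [hW i hi]

theorem stmt0_general {n p : ℕ} (X : Matrix (Fin n) (Fin p) ℝ) (I : Finset (Fin p))
    (W : Matrix (Fin p) (Fin p) ℝ) (hW : ∀ i ∉ I, W i = 0)
    (Wp : Matrix (Fin p) (Fin p) ℝ)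
    (XIp : Matrix ↥I (Fin n) ℝ) (hXIp : IsMoorePenrose (colSub X I) XIp) :
    frob (X - X * W * Wp) ≥ frob (X - colSub X I * XIp * X) := by
  obtain ⟨hmul, hpinv, hsymm, -⟩ := hXIp
  have hidem : IsIdempotentElem (colSub X I * XIp) := by
    rw [IsIdempotentElem, Matrix.mul_assoc, ← Matrix.mul_assoc XIp, hpinv]
  refine frob_sub_mul_le_frob_sub_of_mul_eq hsymm hidem X ?_
  rw [mul_eq_colSub_mul X hW, ← Matrix.mul_assoc, ← Matrix.mul_assoc, hmul]

theorem stmt0 {n p : ℕ} (X : Matrix (Fin n) (Fin p) ℝ) (I : Finset (Fin p))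
    (W : Matrix (Fin p) (Fin p) ℝ) (hW : ∀ i ∉ I, W i = 0)
    (Wp : Matrix (Fin p) (Fin p) ℝ) (hWp : IsMoorePenrose W Wp)
    (XIp : Matrix ↥I (Fin n) ℝ) (hXIp : IsMoorePenrose (colSub X I) XIp) :
    frob (X - X * W * Wp) ≥ frob (X - colSub X I * XIp * X) :=
  stmt0_general X I W hW Wp XIp hXIp
end

section
/- Let X ∈ ℝ^{n×p}, let B ∈ ℝ^{p×k} be fixed, and consider minimizing ‖X − X B Aᵀ‖_F² over A ∈ ℝ^{p×k} with AᵀA = I_k. If XᵀXB = UDVᵀ is a singular value decomposition (U ∈ ℝ^{p×k} and V ∈ ℝ^{k×k} with orthonormal columns, D diagonal nonnegative), then A = UVᵀ is a minimizer. -/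
open Matrix

lemma inner_le_one' {m : ℕ} (u v : Fin m → ℝ) (hu : ∑ j, u j ^ 2 = 1)
    (hv : ∑ j, v j ^ 2 = 1) : ∑ j, u j * v j ≤ 1 := by
  have h0 : 0 ≤ ∑ j, (u j - v j) ^ 2 :=
    Finset.sum_nonneg fun j _ => sq_nonneg _
  have h1 : ∑ j, (u j - v j) ^ 2 =
      (∑ j, u j ^ 2) + (∑ j, v j ^ 2) - 2 * ∑ j, u j * v j := by
    rw [Finset.mul_sum, ← Finset.sum_add_distrib, ← Finset.sum_sub_distrib]
    exact Finset.sum_congr rfl fun j _ => by ring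
  rw [h1, hu, hv] at h0
  linarith

lemma sumsq_trace {n p : ℕ} (M : Matrix (Fin n) (Fin p) ℝ) :
    ∑ i, ∑ j, M i j ^ 2 = trace (Mᵀ * M) := by
  simp only [Matrix.trace, Matrix.diag, Matrix.mul_apply, Matrix.transpose_apply, sq]
  rw [Finset.sum_comm]

lemma trace_mul_diag {k : ℕ} (C E : Matrix (Fin k) (Fin k) ℝ)
    (hE : ∀ i j, i ≠ j → E i j = 0) :
    trace (C * E) = ∑ i, C i i * E i i := by
  simp only [Matrix.trace, Matrix.diag, Matrix.mul_apply]
  refine Finset.sum_congr rfl fun i _ => ?_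
  rw [Finset.sum_eq_single i]
  · intro j _ hj
    rw [hE j i hj, mul_zero]
  · intro h; exact absurd (Finset.mem_univ i) h

lemma expand_trace {n p k : ℕ} (X : Matrix (Fin n) (Fin p) ℝ) (B : Matrix (Fin p) (Fin k) ℝ)
    (A : Matrix (Fin p) (Fin k) ℝ) (hA : Aᵀ * A = 1) :
    trace ((X - X * B * Aᵀ)ᵀ * (X - X * B * Aᵀ)) =
      trace (Xᵀ * X) + trace (Bᵀ * Xᵀ * X * B) - 2 * trace (Aᵀ * (Xᵀ * X * B)) := by
  have h1 : (X - X * B * Aᵀ)ᵀ = Xᵀ - A * Bᵀ * Xᵀ := by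
    simp [Matrix.transpose_sub, Matrix.transpose_mul, Matrix.mul_assoc]
  rw [h1, Matrix.sub_mul, Matrix.mul_sub, Matrix.mul_sub, trace_sub, trace_sub, trace_sub]
  have t1 : trace (Xᵀ * (X * B * Aᵀ)) = trace (Aᵀ * (Xᵀ * X * B)) := by
    rw [show Xᵀ * (X * B * Aᵀ) = (Xᵀ * X * B) * Aᵀ by
      simp only [Matrix.mul_assoc], trace_mul_comm]
  have t2 : trace ((A * Bᵀ * Xᵀ) * X) = trace (Aᵀ * (Xᵀ * X * B)) := by
    rw [← Matrix.trace_transpose ((A * Bᵀ * Xᵀ) * X),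
      show ((A * Bᵀ * Xᵀ) * X)ᵀ = (Xᵀ * X * B) * Aᵀ by
        simp [Matrix.transpose_mul, Matrix.mul_assoc],
      trace_mul_comm]
  have t3 : trace ((A * Bᵀ * Xᵀ) * (X * B * Aᵀ)) = trace (Bᵀ * Xᵀ * X * B) := by
    rw [show (A * Bᵀ * Xᵀ) * (X * B * Aᵀ) = A * ((Bᵀ * Xᵀ * X * B) * Aᵀ) by
      simp only [Matrix.mul_assoc], trace_mul_comm,
      show (Bᵀ * Xᵀ * X * B) * Aᵀ * A = (Bᵀ * Xᵀ * X * B) * (Aᵀ * A) by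
      simp only [Matrix.mul_assoc], hA, Matrix.mul_one]
  rw [t1, t2, t3]; ring

theorem stmt6 {n p k : ℕ} (X : Matrix (Fin n) (Fin p) ℝ) (B : Matrix (Fin p) (Fin k) ℝ)
    (U : Matrix (Fin p) (Fin k) ℝ) (D : Matrix (Fin k) (Fin k) ℝ)
    (V : Matrix (Fin k) (Fin k) ℝ)
    (hU : Uᵀ * U = 1) (hV : Vᵀ * V = 1)
    (hDdiag : ∀ i j, i ≠ j → D i j = 0) (hDpos : ∀ i, 0 ≤ D i i)
    (hSVD : Xᵀ * X * B = U * D * Vᵀ) :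
    ∀ A : Matrix (Fin p) (Fin k) ℝ, Aᵀ * A = 1 →
      frob (X - X * B * (U * Vᵀ)ᵀ) ≤ frob (X - X * B * Aᵀ) := by
  intro A hA
  have hVVt : V * Vᵀ = 1 := mul_eq_one_comm.mp hV
  have hOpt : (U * Vᵀ)ᵀ * (U * Vᵀ) = 1 := by
    rw [Matrix.transpose_mul, Matrix.transpose_transpose,
      show V * Uᵀ * (U * Vᵀ) = V * ((Uᵀ * U) * Vᵀ) by simp only [Matrix.mul_assoc],
      hU, Matrix.one_mul, hVVt]
  -- trace of Aᵀ * (XᵀXB) is at most trace D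
  have hbound : ∀ A' : Matrix (Fin p) (Fin k) ℝ, A'ᵀ * A' = 1 →
      trace (A'ᵀ * (Xᵀ * X * B)) ≤ trace D := by
    intro A' hA'
    rw [hSVD,
      show A'ᵀ * (U * D * Vᵀ) = (A'ᵀ * U * D) * Vᵀ by simp only [Matrix.mul_assoc],
      trace_mul_comm,
      show Vᵀ * (A'ᵀ * U * D) = (Vᵀ * A'ᵀ * U) * D by simp only [Matrix.mul_assoc],
      trace_mul_diag _ _ hDdiag]
    have htr : trace D = ∑ i, D i i := rfl
    rw [htr]
    refine Finset.sum_le_sum fun i _ => ?_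
    have hC : (Vᵀ * A'ᵀ * U) i i ≤ 1 := by
      set W := A' * V with hWdef
      have hW : Wᵀ * W = 1 := by
        rw [hWdef, Matrix.transpose_mul,
          show Vᵀ * A'ᵀ * (A' * V) = Vᵀ * ((A'ᵀ * A') * V) by simp only [Matrix.mul_assoc],
          hA', Matrix.one_mul, hV]
      have hWi : ∑ j, W j i ^ 2 = 1 := by
        have := congrArg (fun M => M i i) hW
        simp only [Matrix.mul_apply, Matrix.transpose_apply, Matrix.one_apply_eq] at this
        rw [← this]
        exact Finset.sum_congr rfl fun j _ => by ring
      have hUi : ∑ j, U j i ^ 2 = 1 := by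
        have := congrArg (fun M => M i i) hU
        simp only [Matrix.mul_apply, Matrix.transpose_apply, Matrix.one_apply_eq] at this
        rw [← this]
        exact Finset.sum_congr rfl fun j _ => by ring
      have heq : (Vᵀ * A'ᵀ * U) i i = ∑ j, W j i * U j i := by
        rw [hWdef]
        simp only [Matrix.mul_apply, Matrix.transpose_apply]
        refine Finset.sum_congr rfl fun j _ => ?_
        congr 1
        exact Finset.sum_congr rfl fun l _ => mul_comm _ _
      rw [heq]
      exact inner_le_one' _ _ hWi hUi
    calc (Vᵀ * A'ᵀ * U) i i * D i i ≤ 1 * D i i :=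
          mul_le_mul_of_nonneg_right hC (hDpos i)
      _ = D i i := one_mul _
  -- the optimal value achieves trace D
  have hopt_eq : trace ((U * Vᵀ)ᵀ * (Xᵀ * X * B)) = trace D := by
    rw [hSVD, Matrix.transpose_mul, Matrix.transpose_transpose,
      show V * Uᵀ * (U * D * Vᵀ) = V * ((Uᵀ * U) * (D * Vᵀ)) by simp only [Matrix.mul_assoc],
      hU, Matrix.one_mul,
      show V * (D * Vᵀ) = (V * D) * Vᵀ by simp only [Matrix.mul_assoc],
      trace_mul_comm,
      show Vᵀ * (V * D) = (Vᵀ * V) * D by simp only [Matrix.mul_assoc],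
      hV, Matrix.one_mul]
  unfold frob
  apply Real.sqrt_le_sqrt
  rw [sumsq_trace, sumsq_trace, expand_trace X B A hA, expand_trace X B (U * Vᵀ) hOpt,
    hopt_eq]
  have := hbound A hA
  linarith
end

section
/- Fix A ∈ ℝ^{p×k} with AᵀA = I_k and X ∈ ℝ^{n×p}, λ, λ₁ > 0. Consider f(B) = ‖X − X B Aᵀ‖_F² + λ‖B‖_F² + λ₁ Σ_{i=1}^p ‖B_{(i)}‖₂ over B ∈ ℝ^{p×k}. At a minimizer B, for each i define b_i = Σ_{j≠i} (X^{(j)ᵀ}X^{(i)}) B_{(j)}ᵀ. Then the i-th row of B is zero if and only if ‖AᵀXᵀX^{(i)} − b_i‖₂ ≤ λ₁/2. -/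
open Matrix
open scoped InnerProductSpace

noncomputable def enorm₂ {k : Type*} [Fintype k] (v : k → ℝ) : ℝ :=
  Real.sqrt (∑ i, v i ^ 2)

/-! Replacing row `i` of `B` by `v` changes the objective by
`(‖X⁽ⁱ⁾‖² + λ) ‖v‖² - 2 ⟪v, w⟫ + λ₁ ‖v‖` plus a constant, where
`w = Aᵀ (X - X B₀ Aᵀ)ᵀ X⁽ⁱ⁾` and `B₀` is `B` with row `i` set to zero; `AᵀA = I` gives
`‖A v‖ = ‖v‖` and turns `w` into the vector of the statement. So `B⁽ⁱ⁾` minimizes this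
one-row problem. If `‖w‖ ≤ λ₁/2`, Cauchy–Schwarz bounds the row objective below by
`(‖X⁽ⁱ⁾‖² + λ) ‖v‖²`, forcing the minimizer to be `0`; otherwise the row objective is negative
at a small positive multiple of `w`, so `0` is not a minimizer. -/

section RowProblem

variable {E : Type*} [NormedAddCommGroup E] [InnerProductSpace ℝ E]

theorem norm_le_half_of_forall_nonneg {a l : ℝ} (ha : 0 < a) (hl : 0 ≤ l) {w : E}
    (hmin : ∀ v : E, 0 ≤ a * ‖v‖ ^ 2 - 2 * ⟪v, w⟫_ℝ + l * ‖v‖) : ‖w‖ ≤ l / 2 := by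
  by_contra! hw
  have hw₀ : 0 < ‖w‖ := by linarith
  -- at `v = t • w` the objective is `t ‖w‖ (a t ‖w‖ - 2 ‖w‖ + l) = t ‖w‖ (l / 2 - ‖w‖) < 0`
  set t := (2 * ‖w‖ - l) / (2 * a * ‖w‖) with ht
  have htpos : 0 < t := div_pos (by linarith) (by positivity)
  have hat : a * t * ‖w‖ = ‖w‖ - l / 2 := by rw [ht]; field_simp
  have h := hmin (t • w)
  rw [norm_smul, Real.norm_of_nonneg htpos.le, real_inner_smul_left,
    real_inner_self_eq_norm_sq] at h
  nlinarith [mul_pos htpos hw₀]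

theorem eq_zero_of_norm_le_half {a l : ℝ} (ha : 0 < a) {w v₀ : E} (hw : ‖w‖ ≤ l / 2)
    (hv₀ : a * ‖v₀‖ ^ 2 - 2 * ⟪v₀, w⟫_ℝ + l * ‖v₀‖ ≤ 0) : v₀ = 0 := by
  have hcs : ⟪v₀, w⟫_ℝ ≤ ‖v₀‖ * (l / 2) :=
    (real_inner_le_norm v₀ w).trans (mul_le_mul_of_nonneg_left hw (norm_nonneg v₀))
  have : a * ‖v₀‖ ^ 2 ≤ 0 := by linarith
  exact norm_eq_zero.1 (pow_eq_zero_iff two_ne_zero |>.1 <|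
    le_antisymm (nonpos_of_mul_nonpos_right this ha) (sq_nonneg _))

theorem eq_zero_iff_norm_le_half_of_forall_le {a l : ℝ} (ha : 0 < a) (hl : 0 ≤ l) {w v₀ : E}
    (hmin : ∀ v : E, a * ‖v₀‖ ^ 2 - 2 * ⟪v₀, w⟫_ℝ + l * ‖v₀‖
      ≤ a * ‖v‖ ^ 2 - 2 * ⟪v, w⟫_ℝ + l * ‖v‖) :
    v₀ = 0 ↔ ‖w‖ ≤ l / 2 := by
  constructor
  · rintro rfl
    exact norm_le_half_of_forall_nonneg ha hl fun v => by simpa using hmin v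
  · intro hw
    exact eq_zero_of_norm_le_half ha hw (by simpa using hmin 0)

end RowProblem

section Matrices

variable {α : Type*} {l m n o : Type*}

theorem frob_sq [Fintype m] [Fintype n] (M : Matrix m n ℝ) : frob M ^ 2 = ∑ r, M r ⬝ᵥ M r := by
  rw [frob, Real.sq_sqrt (by positivity)]
  simp only [dotProduct, sq]

theorem enorm₂_eq_norm_toLp [Fintype n] (v : n → ℝ) : enorm₂ v = ‖WithLp.toLp 2 v‖ := by
  simp [enorm₂, EuclideanSpace.norm_eq]

theorem dotProduct_eq_inner_toLp [Fintype n] (v w : n → ℝ) :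
    v ⬝ᵥ w = ⟪WithLp.toLp 2 v, WithLp.toLp 2 w⟫_ℝ := by
  rw [EuclideanSpace.inner_toLp_toLp, star_trivial, dotProduct_comm]

theorem dotProduct_self_eq_norm_toLp_sq [Fintype n] (v : n → ℝ) :
    v ⬝ᵥ v = ‖WithLp.toLp 2 v‖ ^ 2 := by
  rw [dotProduct_eq_inner_toLp, real_inner_self_eq_norm_sq]

theorem frob_sq_sub_vecMulVec [Fintype m] [Fintype n] (R : Matrix m n ℝ) (x : m → ℝ)
    (u : n → ℝ) :
    frob (R - vecMulVec x u) ^ 2 = frob R ^ 2 - 2 * (x ⬝ᵥ R *ᵥ u) + (x ⬝ᵥ x) * (u ⬝ᵥ u) := by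
  have hrow : ∀ r, (R - vecMulVec x u) r ⬝ᵥ (R - vecMulVec x u) r
      = R r ⬝ᵥ R r - 2 * (x r * (R r ⬝ᵥ u)) + x r * x r * (u ⬝ᵥ u) := by
    intro r
    rw [show (R - vecMulVec x u) r = R r - x r • u from rfl]
    simp only [sub_dotProduct, dotProduct_sub, smul_dotProduct, dotProduct_smul, smul_eq_mul,
      dotProduct_comm u (R r)]
    ring
  simp only [frob_sq, hrow, Finset.sum_add_distrib, Finset.sum_sub_distrib, ← Finset.mul_sum,
    ← Finset.sum_mul]
  rfl

theorem dotProduct_mulVec_self_of_transpose_mul_self [CommSemiring α] [Fintype m] [Fintype n]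
    [DecidableEq n] (A : Matrix m n α) (hA : Aᵀ * A = 1) (v : n → α) :
    (A *ᵥ v) ⬝ᵥ (A *ᵥ v) = v ⬝ᵥ v := by
  rw [dotProduct_mulVec, vecMul_mulVec, hA, vecMul_one]

theorem updateRow_eq_add_vecMulVec [Semiring α] [DecidableEq m] (M : Matrix m n α) (i : m)
    (v : n → α) : M.updateRow i v = M.updateRow i 0 + vecMulVec (Pi.single i 1) v := by
  ext j s
  by_cases h : j = i <;> simp [updateRow_apply, vecMulVec_apply, h]

theorem mul_updateRow_mul_transpose [CommSemiring α] [Fintype m] [Fintype n] [DecidableEq m]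
    (X : Matrix l m α) (M : Matrix m n α) (N : Matrix o n α) (i : m) (v : n → α) :
    X * M.updateRow i v * Nᵀ = X * M.updateRow i 0 * Nᵀ + vecMulVec (X.col i) (N *ᵥ v) := by
  rw [updateRow_eq_add_vecMulVec, Matrix.mul_add, Matrix.add_mul, mul_vecMulVec, vecMulVec_mul,
    mulVec_single_one, vecMul_transpose]

theorem transpose_mul_transpose_sub_mul_mul_transpose [CommRing α] [Fintype m] [Fintype n]
    [DecidableEq n] (X : Matrix l m α) (M A : Matrix m n α) (hA : Aᵀ * A = 1) :
    Aᵀ * (X - X * M * Aᵀ)ᵀ = Aᵀ * Xᵀ - Mᵀ * Xᵀ := by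
  rw [transpose_sub, transpose_mul, transpose_mul, transpose_transpose, Matrix.mul_sub,
    ← Matrix.mul_assoc, hA, Matrix.one_mul]

theorem updateRow_zero_transpose_mulVec [CommSemiring α] [Fintype m] [DecidableEq m]
    (M : Matrix m n α) (i : m) (y : m → α) :
    (M.updateRow i 0)ᵀ *ᵥ y = ∑ j ∈ Finset.univ.erase i, y j • M j := by
  rw [mulVec_transpose, vecMul_eq_sum, ← Finset.add_sum_erase _ _ (Finset.mem_univ i)]
  simp only [updateRow_self, smul_zero, zero_add]
  exact Finset.sum_congr rfl fun j hj => by rw [updateRow_ne (Finset.ne_of_mem_erase hj)]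

theorem sum_apply_updateRow {β : Type*} [Zero α] [AddCommMonoid β] [Fintype m] [DecidableEq m]
    (f : (n → α) → β) (hf : f 0 = 0) (M : Matrix m n α) (i : m) (v : n → α) :
    ∑ j, f (M.updateRow i v j) = ∑ j, f (M.updateRow i 0 j) + f v := by
  simp only [← Finset.add_sum_erase _ _ (Finset.mem_univ i), updateRow_self, hf, zero_add]
  rw [add_comm]
  congr 1
  exact Finset.sum_congr rfl fun j hj => by
    rw [updateRow_ne (Finset.ne_of_mem_erase hj), updateRow_ne (Finset.ne_of_mem_erase hj)]

noncomputable def groupLassoObjective [Fintype l] [Fintype m] [Fintype n] (X : Matrix l m ℝ)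
    (A : Matrix m n ℝ) (lam lam1 : ℝ) (C : Matrix m n ℝ) : ℝ :=
  frob (X - X * C * Aᵀ) ^ 2 + lam * frob C ^ 2 + lam1 * ∑ i, enorm₂ (C i)

theorem groupLassoObjective_updateRow [Fintype l] [Fintype m] [Fintype n] [DecidableEq m]
    [DecidableEq n] (X : Matrix l m ℝ) (A : Matrix m n ℝ) (hA : Aᵀ * A = 1) (lam lam1 : ℝ)
    (B : Matrix m n ℝ) (i : m) (v : n → ℝ) :
    groupLassoObjective X A lam lam1 (B.updateRow i v)
      = groupLassoObjective X A lam lam1 (B.updateRow i 0)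
        + ((X.col i ⬝ᵥ X.col i + lam) * (v ⬝ᵥ v)
          - 2 * (v ⬝ᵥ Aᵀ *ᵥ (X - X * B.updateRow i 0 * Aᵀ)ᵀ *ᵥ X.col i) + lam1 * enorm₂ v) := by
  have hfit : X - X * B.updateRow i v * Aᵀ
      = (X - X * B.updateRow i 0 * Aᵀ) - vecMulVec (X.col i) (A *ᵥ v) := by
    rw [mul_updateRow_mul_transpose, sub_add_eq_sub_sub]
  have hcross : X.col i ⬝ᵥ (X - X * B.updateRow i 0 * Aᵀ) *ᵥ A *ᵥ v
      = v ⬝ᵥ Aᵀ *ᵥ (X - X * B.updateRow i 0 * Aᵀ)ᵀ *ᵥ X.col i := by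
    rw [mulVec_mulVec, dotProduct_mulVec, ← mulVec_transpose, transpose_mul, ← mulVec_mulVec,
      dotProduct_comm]
  have hridge : frob (B.updateRow i v) ^ 2 = frob (B.updateRow i 0) ^ 2 + v ⬝ᵥ v := by
    simp only [frob_sq]
    exact sum_apply_updateRow (fun r => r ⬝ᵥ r) (dotProduct_zero 0) B i v
  have hgroup : ∑ j, enorm₂ (B.updateRow i v j) = ∑ j, enorm₂ (B.updateRow i 0 j) + enorm₂ v :=
    sum_apply_updateRow enorm₂ (by simp [enorm₂]) B i v
  rw [groupLassoObjective, groupLassoObjective, hfit, frob_sq_sub_vecMulVec,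
    dotProduct_mulVec_self_of_transpose_mul_self A hA, hcross, hridge, hgroup]
  ring

end Matrices

theorem stmt7 {n p k : ℕ} (X : Matrix (Fin n) (Fin p) ℝ) (A : Matrix (Fin p) (Fin k) ℝ)
    (hA : Aᵀ * A = 1) (lam lam1 : ℝ) (hlam : 0 < lam) (hlam1 : 0 < lam1)
    (B : Matrix (Fin p) (Fin k) ℝ)
    (hmin : ∀ C : Matrix (Fin p) (Fin k) ℝ,
      frob (X - X * B * Aᵀ) ^ 2 + lam * frob B ^ 2 + lam1 * ∑ i, enorm₂ (B i)
        ≤ frob (X - X * C * Aᵀ) ^ 2 + lam * frob C ^ 2 + lam1 * ∑ i, enorm₂ (C i)) :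
    ∀ i : Fin p,
      B i = 0 ↔
        enorm₂ ((Aᵀ * Xᵀ).mulVec (fun r => X r i)
            - ∑ j ∈ Finset.univ.erase i, (∑ r, X r j * X r i) • B j) ≤ lam1 / 2 := by
  intro i
  set a := X.col i ⬝ᵥ X.col i + lam with ha
  set w := Aᵀ *ᵥ (X - X * B.updateRow i 0 * Aᵀ)ᵀ *ᵥ X.col i with hw_def
  have hw : w = (Aᵀ * Xᵀ) *ᵥ (fun r => X r i)
      - ∑ j ∈ Finset.univ.erase i, (∑ r, X r j * X r i) • B j := by
    rw [hw_def, mulVec_mulVec, transpose_mul_transpose_sub_mul_mul_transpose X _ A hA,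
      sub_mulVec, ← mulVec_mulVec _ (B.updateRow i 0)ᵀ, updateRow_zero_transpose_mulVec]
    rfl
  have hrow : ∀ v, a * (B i ⬝ᵥ B i) - 2 * (B i ⬝ᵥ w) + lam1 * enorm₂ (B i)
      ≤ a * (v ⬝ᵥ v) - 2 * (v ⬝ᵥ w) + lam1 * enorm₂ v := by
    intro v
    have hB := groupLassoObjective_updateRow X A hA lam lam1 B i (B i)
    rw [updateRow_eq_self] at hB
    have hv := groupLassoObjective_updateRow X A hA lam lam1 B i v
    have : groupLassoObjective X A lam lam1 B
        ≤ groupLassoObjective X A lam lam1 (B.updateRow i v) := hmin _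
    linarith
  have ha_pos : 0 < a := by rw [ha, dotProduct_self_eq_norm_toLp_sq]; positivity
  rw [← hw, enorm₂_eq_norm_toLp, ← (WithLp.toLp_injective 2).eq_iff, WithLp.toLp_zero]
  refine eq_zero_iff_norm_le_half_of_forall_le ha_pos hlam1.le fun v => ?_
  simpa only [dotProduct_self_eq_norm_toLp_sq, dotProduct_eq_inner_toLp, enorm₂_eq_norm_toLp,
    WithLp.toLp_ofLp] using hrow v.ofLp
end

section
/- Fix A ∈ ℝ^{p×k} with AᵀA = I_k and X, λ, λ₁ as above. If B satisfies the subgradient stationarity conditions and B_{(i)} ≠ 0, then 2‖AᵀXᵀX^{(i)} − b_i‖₂ = (2‖X^{(i)}‖₂² + 2λ + λ₁/‖B_{(i)}‖₂)·‖B_{(i)}‖₂ > λ₁, where b_i = Σ_{j≠i}(X^{(j)ᵀ}X^{(i)})B_{(j)}ᵀ. -/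
open Matrix

noncomputable def enorm2 {k : Type*} [Fintype k] (v : k → ℝ) : ℝ :=
  Real.sqrt (∑ i, v i ^ 2)

/-! Stationarity rearranges to `AᵀXᵀX^{(i)} - b_i = c • B_{(i)}` with
`c = ‖X^{(i)}‖² + λ + λ₁ / (2‖B_{(i)}‖) > 0`; taking norms gives the identity, and
`2c‖B_{(i)}‖ = (2‖X^{(i)}‖² + 2λ)‖B_{(i)}‖ + λ₁ > λ₁`. -/

section enorm2

variable {ι : Type*} [Fintype ι]

theorem enorm2_eq_norm (v : ι → ℝ) : enorm2 v = ‖(WithLp.toLp 2 v : EuclideanSpace ℝ ι)‖ := by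
  simp [enorm2, EuclideanSpace.norm_eq]

theorem enorm2_pos {v : ι → ℝ} (hv : v ≠ 0) : 0 < enorm2 v := by
  rw [enorm2_eq_norm, norm_pos_iff]
  simpa using hv

theorem enorm2_smul (c : ℝ) (v : ι → ℝ) : enorm2 (c • v) = |c| * enorm2 v := by
  rw [enorm2_eq_norm, enorm2_eq_norm, WithLp.toLp_smul, norm_smul, Real.norm_eq_abs]

end enorm2

theorem sub_eq_smul_of_add_smul_sub_add_smul_eq_zero {R V : Type*} [CommRing R] [AddCommGroup V]
    [Module R V] {b g v : V} {a c : R} (h : b + a • v - g + c • v = 0) : g - b = (a + c) • v := by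
  linear_combination (norm := module) -h

theorem stmt9_general {n p k : ℕ} (X : Matrix (Fin n) (Fin p) ℝ) (A : Matrix (Fin p) (Fin k) ℝ)
    (lam lam1 : ℝ) (hlam : 0 < lam) (hlam1 : 0 < lam1)
    (B : Matrix (Fin p) (Fin k) ℝ) (i : Fin p) (hBi : B i ≠ 0)
    (hstat :
      (∑ j ∈ Finset.univ.erase i, (∑ r, X r j * X r i) • B j)
        + ((∑ r, X r i ^ 2) + lam) • B i
        - (Aᵀ * Xᵀ).mulVec (fun r => X r i)
        + (lam1 / 2) • (enorm2 (B i))⁻¹ • B i = 0) :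
    2 * enorm2 ((Aᵀ * Xᵀ).mulVec (fun r => X r i)
        - ∑ j ∈ Finset.univ.erase i, (∑ r, X r j * X r i) • B j)
      = (2 * (∑ r, X r i ^ 2) + 2 * lam + lam1 / enorm2 (B i)) * enorm2 (B i)
    ∧ lam1 < 2 * enorm2 ((Aᵀ * Xᵀ).mulVec (fun r => X r i)
        - ∑ j ∈ Finset.univ.erase i, (∑ r, X r j * X r i) • B j) := by
  rw [smul_smul] at hstat
  rw [sub_eq_smul_of_add_smul_sub_add_smul_eq_zero hstat, enorm2_smul]
  have hnorm : 0 < enorm2 (B i) := enorm2_pos hBi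
  have hcol : 0 ≤ ∑ r, X r i ^ 2 := Finset.sum_nonneg fun r _ => sq_nonneg (X r i)
  rw [abs_of_pos (by positivity)]
  constructor
  · field_simp
  · have : 0 < (2 * (∑ r, X r i ^ 2) + 2 * lam) * enorm2 (B i) := by positivity
    field_simp
    linarith

theorem stmt9 {n p k : ℕ} (X : Matrix (Fin n) (Fin p) ℝ) (A : Matrix (Fin p) (Fin k) ℝ)
    (hA : Aᵀ * A = 1) (lam lam1 : ℝ) (hlam : 0 < lam) (hlam1 : 0 < lam1)
    (B : Matrix (Fin p) (Fin k) ℝ) (i : Fin p) (hBi : B i ≠ 0)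
    (hstat :
      (∑ j ∈ Finset.univ.erase i, (∑ r, X r j * X r i) • B j)
        + ((∑ r, X r i ^ 2) + lam) • B i
        - (Aᵀ * Xᵀ).mulVec (fun r => X r i)
        + (lam1 / 2) • (enorm2 (B i))⁻¹ • B i = 0) :
    2 * enorm2 ((Aᵀ * Xᵀ).mulVec (fun r => X r i)
        - ∑ j ∈ Finset.univ.erase i, (∑ r, X r j * X r i) • B j)
      = (2 * (∑ r, X r i ^ 2) + 2 * lam + lam1 / enorm2 (B i)) * enorm2 (B i)
    ∧ lam1 < 2 * enorm2 ((Aᵀ * Xᵀ).mulVec (fun r => X r i)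
        - ∑ j ∈ Finset.univ.erase i, (∑ r, X r j * X r i) • B j) :=
  stmt9_general X A lam lam1 hlam hlam1 B i hBi hstat
end

section
/- Let X ∈ ℝ^{n×p}, c ≤ p, and let B* minimize ‖X − XB‖_F over B ∈ ℝ^{p×p} subject to B having at most c nonzero rows. Let I* = {i : B*_{(i)} ≠ 0}. Then ‖X − XB*‖_F = ‖X − X^{I*}(X^{I*})⁺X‖_F; i.e., the optimal row-sparse self-regression coefficient achieves exactly the projection error onto the span of the selected columns. -/
open Matrix

noncomputable instance decidableRowNeZero {m k : Type*} [Fintype k] (B : Matrix m k ℝ) :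
    DecidablePred fun i => B i ≠ 0 := fun i => instDecidableNot

/-!
If `B` vanishes off the rows `I`, then `X B = X^I B_I` lies in the column span of `X^I`, while the
Penrose identities give `(X^I)ᵀ (X - X^I (X^I)⁺ X) = 0`; by Pythagoras `X - X^I (X^I)⁺ X` is the
smallest residual of this form. Conversely `(X^I)⁺ X`, padded with zero rows outside `I`, is a
feasible coefficient matrix with exactly that residual, so the minimality of `B*` gives equality.
-/

section Frobenius

variable {m n k : Type*} [Fintype m] [Fintype k]

lemma sum_sum_mul_eq_trace_transpose_mul [Fintype n] (R M : Matrix m n ℝ) :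
    ∑ i, ∑ j, R i j * M i j = trace (Rᵀ * M) := by
  simp only [trace, diag, mul_apply, transpose_apply]
  exact Finset.sum_comm

lemma frob_le_frob_add_of_transpose_mul_eq_zero_s15 [Fintype n] {A : Matrix m k ℝ} {R : Matrix m n ℝ}
    (Z : Matrix k n ℝ) (h : Aᵀ * R = 0) : frob R ≤ frob (R + A * Z) := by
  have hcross : ∑ i, ∑ j, R i j * (A * Z) i j = 0 := by
    rw [sum_sum_mul_eq_trace_transpose_mul, ← Matrix.mul_assoc,
      show Rᵀ * A = (Aᵀ * R)ᵀ by rw [transpose_mul, transpose_transpose], h]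
    simp
  have hAZ : 0 ≤ ∑ i, ∑ j, (A * Z) i j ^ 2 := by positivity
  apply Real.sqrt_le_sqrt
  calc ∑ i, ∑ j, R i j ^ 2
      ≤ ∑ i, ∑ j, R i j ^ 2 + ∑ i, ∑ j, (A * Z) i j ^ 2
        + 2 * ∑ i, ∑ j, R i j * (A * Z) i j := by linarith
    _ = ∑ i, ∑ j, (R + A * Z) i j ^ 2 := by
        simp only [Matrix.add_apply, add_sq, Finset.sum_add_distrib, Finset.mul_sum]
        ring_nf

lemma IsMoorePenrose.transpose_mul_sub_mul_mul_eq_zero {A : Matrix m k ℝ} {Ap : Matrix k m ℝ}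
    (hA : IsMoorePenrose A Ap) (Y : Matrix m n ℝ) : Aᵀ * (Y - A * Ap * Y) = 0 := by
  obtain ⟨hAApA, -, hsymm, -⟩ := hA
  have hproj : Aᵀ * (A * Ap) = Aᵀ := by
    rw [← hsymm, ← transpose_mul, hAApA]
  rw [Matrix.mul_sub, ← Matrix.mul_assoc, hproj, sub_self]

lemma IsMoorePenrose.frob_sub_mul_mul_le [Fintype n] {A : Matrix m k ℝ} {Ap : Matrix k m ℝ}
    (hA : IsMoorePenrose A Ap) (Y : Matrix m n ℝ) (Z : Matrix k n ℝ) :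
    frob (Y - A * Ap * Y) ≤ frob (Y - A * Z) := by
  have hdecomp : Y - A * Z = (Y - A * Ap * Y) + A * (Ap * Y - Z) := by
    rw [Matrix.mul_sub, ← Matrix.mul_assoc]
    abel
  rw [hdecomp]
  exact frob_le_frob_add_of_transpose_mul_eq_zero_s15 _ (hA.transpose_mul_sub_mul_mul_eq_zero Y)

end Frobenius

section RowSupport

variable {n p : ℕ} {κ : Type*}

lemma mul_eq_colSub_mul_submatrix [Fintype κ] (X : Matrix (Fin n) (Fin p) ℝ)
    {I : Finset (Fin p)} {B : Matrix (Fin p) κ ℝ} (hB : ∀ k ∉ I, B k = 0) :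
    X * B = colSub X I * B.submatrix Subtype.val id := by
  ext i j
  have hsum : ∑ k, X i k * B k j = ∑ k ∈ I, X i k * B k j :=
    (Finset.sum_subset (Finset.subset_univ I) fun k _ hk => by simp [hB k hk]).symm
  simp only [mul_apply, hsum, ← Finset.sum_attach I]
  rfl

def extendRows (I : Finset (Fin p)) (M : Matrix I κ ℝ) : Matrix (Fin p) κ ℝ :=
  fun k j => if h : k ∈ I then M ⟨k, h⟩ j else 0

lemma extendRows_of_notMem {I : Finset (Fin p)} (M : Matrix I κ ℝ) {k : Fin p} (hk : k ∉ I) :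
    extendRows I M k = 0 := by
  funext j
  simp [extendRows, hk]

lemma submatrix_extendRows (I : Finset (Fin p)) (M : Matrix I κ ℝ) :
    (extendRows I M).submatrix Subtype.val id = M := by
  ext k j
  simp [extendRows]

lemma mul_extendRows [Fintype κ] (X : Matrix (Fin n) (Fin p) ℝ) (I : Finset (Fin p))
    (M : Matrix I κ ℝ) : X * extendRows I M = colSub X I * M := by
  rw [mul_eq_colSub_mul_submatrix X fun k hk => extendRows_of_notMem M hk, submatrix_extendRows]
  rfl

lemma filter_extendRows_ne_zero_subset [Fintype κ] (I : Finset (Fin p)) (M : Matrix I κ ℝ) :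
    Finset.univ.filter (fun k => extendRows I M k ≠ 0) ⊆ I := fun k hk => by
  by_contra hkI
  exact (Finset.mem_filter.mp hk).2 (extendRows_of_notMem M hkI)

end RowSupport

theorem stmt15 {n p : ℕ} (X : Matrix (Fin n) (Fin p) ℝ) (c : ℕ)
    (B : Matrix (Fin p) (Fin p) ℝ)
    (hfeas : (Finset.univ.filter (fun i => B i ≠ 0)).card ≤ c)
    (hmin : ∀ C : Matrix (Fin p) (Fin p) ℝ,
      (Finset.univ.filter (fun i => C i ≠ 0)).card ≤ c →
        frob (X - X * B) ≤ frob (X - X * C))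
    (XIp : Matrix ↥(Finset.univ.filter (fun i => B i ≠ 0)) (Fin n) ℝ)
    (hXIp : IsMoorePenrose (colSub X (Finset.univ.filter (fun i => B i ≠ 0))) XIp) :
    frob (X - X * B)
      = frob (X - colSub X (Finset.univ.filter (fun i => B i ≠ 0)) * XIp * X) := by
  have hB : ∀ k ∉ Finset.univ.filter (fun i => B i ≠ 0), B k = 0 := fun k hk => by
    by_contra hne
    exact hk (Finset.mem_filter.mpr ⟨Finset.mem_univ k, hne⟩)
  refine le_antisymm ?_ ?_
  · have hC := hmin (extendRows _ (XIp * X))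
      ((Finset.card_le_card (filter_extendRows_ne_zero_subset _ _)).trans hfeas)
    rwa [mul_extendRows, ← Matrix.mul_assoc] at hC
  · rw [mul_eq_colSub_mul_submatrix X hB]
    exact hXIp.frob_sub_mul_mul_le X _
end
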